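/- Let Â ∈ ℝ^{n_x×n_x}, B̂ ∈ ℝ^{n_x×n_u}, let V = {(Δ_{A,1},Δ_{B,1}),…,(Δ_{A,M},Δ_{B,M})} be a finite set of matrix pairs, let σ_w > 0, let x_0 ∈ ℝ^{n_x}, and let (F_x, b_x), (F_u, b_u), (F_T, b_T) define polytopic constraint sets X = {x : F_x x ≤ b_x}, U = {u : F_u u ≤ b_u}, X_T = {x : F_T x ≤ b_T}. Let Φ̃_x ∈ ℝ^{(T+1)n_x × (T+1)n_x}, Φ̃_u ∈ ℝ^{(T+1)n_u × (T+1)n_x}, Σ ∈ ℝ^{(T+1)n_x × (T+1)n_x} be block-lower-triangular with Σ_{0,0} = I and Σ_{t+1,t+1} = diag(d_t), d_t ∈ ℝ^{n_x} with strictly positive entries, satisfying: (a) the affine constraint (I − Z bold(Â)) Φ̃_x − Z bold(B̂) Φ̃_u = Σ; (b) the over-approximation constraints: for all t = 0,…,T−1, all (Δ_{A,j},Δ_{B,j}) ∈ V, all i ∈ {1,…,n_x}, |e_i^⊤(Δ_{A,j}(Φ̃_x)_{t,0} + Δ_{B,j}(Φ̃_u)_{t,0} − Σ_{t+1,0}) x_0|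 + Σ_{i'=1}^{t} ‖e_i^⊤(Δ_{A,j}(Φ̃_x)_{t,i'} + Δ_{B,j}(Φ̃_u)_{t,i'} − Σ_{t+1,i'})‖_1 + σ_w ≤ (d_t)_i; (c) the tightened state constraints: for every row (f,b) of (F_x,b_x) and t = 0,…,T−1, f^⊤(Φ̃_x)_{t,0} x_0 + Σ_{i=1}^{t} ‖f^⊤(Φ̃_x)_{t,i}‖_1 ≤ b; (d) the tightened terminal constraints: for every row (f,b) of (F_T,b_T), f^⊤(Φ̃_x)_{T,0} x_0 + Σ_{i=1}^{T} ‖f^⊤(Φ̃_x)_{T,i}‖_1 ≤ b; (e) the tightened input constraints: for every row (f,b) of (F_u,b_u) and t = 0,…,T−1, f^⊤(Φ̃_u)_{t,0} x_0 + Σ_{i=1}^{t} ‖f^⊤(Φ̃_u)_{t,i}‖_1 ≤ b. Then Φ̃_x is invertible, K := Φ̃_u Φ̃_x^{-1} is block-lower-triangular with blocks K_{t,i}, and for every (Δ_A,Δ_B) in the convex hull of V and every w_0,…,w_{T−1} ∈ ℝ^{n_x} with ‖w_t‖_∞ ≤ σ_w, the closed-loop trajectory defined by x_0(traj) = x_0,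 u_t = Σ_{i=0}^{t} K_{t,i} x_i, x_{t+1} = (Â + Δ_A) x_t + (B̂ + Δ_B) u_t + w_t satisfies x_t ∈ X and u_t ∈ U for t = 0,…,T−1 and x_T ∈ X_T. -/

import Mathlib

open Matrix

/-- The block down-shift matrix. -/
def shiftZ (T n : ℕ) : Matrix (Fin (T + 1) × Fin n) (Fin (T + 1) × Fin n) ℝ :=
  fun p q => if (p.1 : ℕ) = (q.1 : ℕ) + 1 ∧ p.2 = q.2 then 1 else 0

/-- Block-lower-triangular predicate. -/
def BlockLT {T p q : ℕ} (M : Matrix (Fin (T + 1) × Fin p) (Fin (T + 1) × Fin q) ℝ) : Prop :=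
  ∀ i j : Fin (T + 1), i < j → ∀ a b, M (i, a) (j, b) = 0

/-- Block-diagonal matrix with `T+1` copies of `M` on the diagonal. -/
def blkdiag (T : ℕ) {p q : ℕ} (M : Matrix (Fin p) (Fin q) ℝ) :
    Matrix (Fin (T + 1) × Fin p) (Fin (T + 1) × Fin q) ℝ :=
  fun a b => if a.1 = b.1 then M a.2 b.2 else 0

/-- The `(i,j)` block of a block-partitioned matrix. -/
def blk {T p q : ℕ} (M : Matrix (Fin (T + 1) × Fin p) (Fin (T + 1) × Fin q) ℝ)
    (i j : Fin (T + 1)) : Matrix (Fin p) (Fin q) ℝ :=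
  fun a b => M (i, a) (j, b)

/-- extract a block of a stacked vector -/
def blockv {T n : ℕ} (v : Fin (T + 1) × Fin n → ℝ) (t : Fin (T + 1)) : Fin n → ℝ :=
  fun a => v (t, a)

lemma shiftZ_mulVec_zero {T n : ℕ} (v : Fin (T + 1) × Fin n → ℝ) (a : Fin n) :
    (shiftZ T n).mulVec v (0, a) = 0 := by
  unfold shiftZ mulVec dotProduct
  apply Finset.sum_eq_zero
  intro q _
  simp

lemma shiftZ_mulVec_succ {T n : ℕ} (v : Fin (T + 1) × Fin n → ℝ) (t : Fin T) (a : Fin n) :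
    (shiftZ T n).mulVec v (t.succ, a) = v (t.castSucc, a) := by
  unfold shiftZ mulVec dotProduct
  rw [Fintype.sum_prod_type]
  rw [Finset.sum_eq_single t.castSucc]
  · rw [Finset.sum_eq_single a]
    · simp
    · intro b _ hb; simp [hb.symm]
    · simp
  · intro s _ hs
    apply Finset.sum_eq_zero; intro b _
    simp only [Fin.val_succ, ite_mul, one_mul, zero_mul, ite_eq_right_iff, and_imp]
    intro h1 h2
    exact absurd (Fin.ext (show (s:ℕ) = (t.castSucc:ℕ) by simpa using h1.symm)) hs
  · simp

lemma mulVec_blockv {T p q : ℕ} (M : Matrix (Fin (T + 1) × Fin p) (Fin (T + 1) × Fin q) ℝ)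
    (v : Fin (T + 1) × Fin q → ℝ) (t : Fin (T + 1)) :
    blockv (M.mulVec v) t = ∑ s : Fin (T + 1), (blk M t s).mulVec (blockv v s) := by
  funext a
  simp only [blockv, mulVec, dotProduct, Finset.sum_apply]
  rw [Fintype.sum_prod_type]
  rfl

lemma blkdiag_mulVec {T n q : ℕ} (M : Matrix (Fin n) (Fin q) ℝ)
    (v : Fin (T + 1) × Fin q → ℝ) (t : Fin (T + 1)) (a : Fin n) :
    (blkdiag T M).mulVec v (t, a) = M.mulVec (blockv v t) a := by
  unfold blkdiag mulVec dotProduct blockv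
  rw [Fintype.sum_prod_type]
  rw [Finset.sum_eq_single t]
  · simp
  · intro s _ hs
    apply Finset.sum_eq_zero; intro b _
    simp [hs.symm]
  · simp

lemma shiftZ_mul_row_zero {T n q : ℕ} (N : Matrix (Fin (T + 1) × Fin n) (Fin (T + 1) × Fin q) ℝ)
    (a : Fin n) (r : Fin (T + 1) × Fin q) : (shiftZ T n * N) (0, a) r = 0 := by
  have : (shiftZ T n * N) (0, a) r = (shiftZ T n).mulVec (fun p => N p r) (0, a) := rfl
  rw [this, shiftZ_mulVec_zero]

lemma shiftZ_mul_row_succ {T n q : ℕ} (N : Matrix (Fin (T + 1) × Fin n) (Fin (T + 1) × Fin q) ℝ)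
    (t : Fin T) (a : Fin n) (r : Fin (T + 1) × Fin q) :
    (shiftZ T n * N) (t.succ, a) r = N (t.castSucc, a) r := by
  have : (shiftZ T n * N) (t.succ, a) r = (shiftZ T n).mulVec (fun p => N p r) (t.succ, a) := rfl
  rw [this, shiftZ_mulVec_succ]

lemma blkdiag_mul_row {T n p q : ℕ} (M : Matrix (Fin n) (Fin p) ℝ)
    (N : Matrix (Fin (T + 1) × Fin p) (Fin (T + 1) × Fin q) ℝ)
    (t : Fin (T + 1)) (a : Fin n) (r : Fin (T + 1) × Fin q) :
    (blkdiag T M * N) (t, a) r = ∑ c : Fin p, M a c * N (t, c) r := by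
  have : (blkdiag T M * N) (t, a) r = (blkdiag T M).mulVec (fun p => N p r) (t, a) := rfl
  rw [this, blkdiag_mulVec]
  rfl

/-- rows of `shiftZ * (blkdiag M * Φ)` vanish on the diagonal block when Φ is BlockLT -/
lemma shift_blkdiag_diag_zero {T n p : ℕ}
    (M : Matrix (Fin n) (Fin p) ℝ)
    (Φ : Matrix (Fin (T + 1) × Fin p) (Fin (T + 1) × Fin n) ℝ) (hΦ : BlockLT Φ)
    (t : Fin (T + 1)) (a : Fin n) (b : Fin n) :
    (shiftZ T n * (blkdiag T M * Φ)) (t, a) (t, b) = 0 := by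
  induction t using Fin.cases with
  | zero => exact shiftZ_mul_row_zero _ _ _
  | succ s =>
    rw [shiftZ_mul_row_succ, blkdiag_mul_row]
    apply Finset.sum_eq_zero
    intro c _
    rw [hΦ s.castSucc s.succ Fin.castSucc_lt_succ c b, mul_zero]

lemma blockLT_mul {T p q r : ℕ} {M : Matrix (Fin (T + 1) × Fin p) (Fin (T + 1) × Fin q) ℝ}
    {N : Matrix (Fin (T + 1) × Fin q) (Fin (T + 1) × Fin r) ℝ}
    (hM : BlockLT M) (hN : BlockLT N) : BlockLT (M * N) := by
  intro i j hij a b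
  rw [mul_apply, Fintype.sum_prod_type]
  apply Finset.sum_eq_zero
  intro s _
  apply Finset.sum_eq_zero
  intro c _
  rcases lt_or_ge i s with h | h
  · rw [hM i s h a c, zero_mul]
  · rw [hN s j (lt_of_le_of_lt h hij) c b, mul_zero]

lemma blockLT_iff {T n : ℕ} (M : Matrix (Fin (T + 1) × Fin n) (Fin (T + 1) × Fin n) ℝ) :
    BlockLT M ↔ M.BlockTriangular (fun p => OrderDual.toDual p.1) := by
  constructor
  · rintro h ⟨i, a⟩ ⟨j, b⟩ hij
    exact h i j (by exact hij) a b
  · intro h i j hij a b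
    exact h (show OrderDual.toDual j < OrderDual.toDual i from hij)

lemma det_toSquareBlock_eq {T n : ℕ} (M : Matrix (Fin (T + 1) × Fin n) (Fin (T + 1) × Fin n) ℝ)
    (t : Fin (T + 1)) :
    (M.toSquareBlock (fun p => OrderDual.toDual p.1) (OrderDual.toDual t)).det
      = (blk M t t).det := by
  let e : {p : Fin (T + 1) × Fin n // OrderDual.toDual p.1 = OrderDual.toDual t} ≃ Fin n :=
    { toFun := fun q => q.1.2
      invFun := fun a => ⟨(t, a), rfl⟩
      left_inv := by rintro ⟨⟨s, a⟩, hs⟩; simp at hs; subst hs; rfl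
      right_inv := fun a => rfl }
  have : M.toSquareBlock (fun p => OrderDual.toDual p.1) (OrderDual.toDual t)
      = (blk M t t).submatrix e e := by
    funext i j
    have hi : i.1.1 = t := by have := i.2; simpa using this
    have hj : j.1.1 = t := by have := j.2; simpa using this
    show M i.1 j.1 = M (t, i.1.2) (t, j.1.2)
    rw [show i.1 = (t, i.1.2) from Prod.ext hi rfl, show j.1 = (t, j.1.2) from Prod.ext hj rfl]
  rw [this, Matrix.det_submatrix_equiv_self]

lemma isUnit_det_of_blockLT {T n : ℕ} (M : Matrix (Fin (T + 1) × Fin n) (Fin (T + 1) × Fin n) ℝ)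
    (h : BlockLT M) (hdiag : ∀ t, (blk M t t).det ≠ 0) : IsUnit M.det := by
  rw [isUnit_iff_ne_zero, ((blockLT_iff M).mp h).det_fintype]
  rw [Finset.prod_ne_zero_iff]
  intro k _
  have : k = OrderDual.toDual (OrderDual.ofDual k) := rfl
  rw [this, det_toSquareBlock_eq]
  exact hdiag _

lemma blockLT_inv {T n : ℕ} (M : Matrix (Fin (T + 1) × Fin n) (Fin (T + 1) × Fin n) ℝ)
    (h : BlockLT M) (hdet : IsUnit M.det) : BlockLT M⁻¹ := by
  have : Invertible M := M.invertibleOfIsUnitDet hdet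
  exact (blockLT_iff _).mpr (Matrix.blockTriangular_inv_of_blockTriangular ((blockLT_iff M).mp h))

lemma mulVec_sum' {m n : ℕ} {κ : Type*} (s : Finset κ) (A : Matrix (Fin m) (Fin n) ℝ)
    (v : κ → Fin n → ℝ) : A.mulVec (∑ i ∈ s, v i) = ∑ i ∈ s, A.mulVec (v i) := by
  funext a
  simp only [mulVec, dotProduct, Finset.sum_apply, Finset.mul_sum]
  exact Finset.sum_comm

lemma sum_smul_mulVec {m n : ℕ} {κ : Type*} (s : Finset κ) (c : κ → ℝ)
    (N : κ → Matrix (Fin m) (Fin n) ℝ) (v : Fin n → ℝ) (a : Fin m) :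
    ((∑ i ∈ s, c i • N i).mulVec v) a = ∑ i ∈ s, c i * ((N i).mulVec v) a := by
  simp only [mulVec, dotProduct, Matrix.sum_apply, Matrix.smul_apply, smul_eq_mul,
    Finset.sum_mul, Finset.mul_sum, mul_assoc]
  exact Finset.sum_comm

lemma sum_smul_entry {m n : ℕ} {κ : Type*} (s : Finset κ) (c : κ → ℝ)
    (N : κ → Matrix (Fin m) (Fin n) ℝ) (a : Fin m) (k : Fin n) :
    (∑ i ∈ s, c i • N i) a k = ∑ i ∈ s, c i * (N i) a k := by
  simp [Matrix.sum_apply, Matrix.smul_apply]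

lemma blkdiag_add {T p q : ℕ} (M N : Matrix (Fin p) (Fin q) ℝ) :
    blkdiag T (M + N) = blkdiag T M + blkdiag T N := by
  funext a b
  rw [Matrix.add_apply]
  unfold blkdiag
  by_cases h : a.1 = b.1 <;> simp [h]

lemma dot_le {n : ℕ} (a : Fin n → ℝ) (v : Fin n → ℝ) (hv : ∀ k, |v k| ≤ 1) :
    a ⬝ᵥ v ≤ ∑ k, |a k| := by
  unfold dotProduct
  apply Finset.sum_le_sum
  intro k _
  calc a k * v k ≤ |a k * v k| := le_abs_self _
    _ = |a k| * |v k| := abs_mul _ _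
    _ ≤ |a k| * 1 := by
        exact mul_le_mul_of_nonneg_left (hv k) (abs_nonneg _)
    _ = |a k| := mul_one _

lemma abs_mulVec_le {m n : ℕ} (E : Matrix (Fin m) (Fin n) ℝ) (v : Fin n → ℝ)
    (hv : ∀ k, |v k| ≤ 1) (a : Fin m) : |E.mulVec v a| ≤ ∑ k, |E a k| := by
  have h0 : E.mulVec v a = ∑ k, E a k * v k := rfl
  rw [h0]
  have h1 : |∑ k, E a k * v k| ≤ ∑ k, |E a k * v k| := Finset.abs_sum_le_sum_abs _ _
  refine h1.trans (Finset.sum_le_sum fun k _ => ?_)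
  rw [abs_mul]
  calc |E a k| * |v k| ≤ |E a k| * 1 := mul_le_mul_of_nonneg_left (hv k) (abs_nonneg _)
    _ = _ := mul_one _

lemma dotProduct_sum' {n : ℕ} {κ : Type*} (s : Finset κ) (u : Fin n → ℝ)
    (v : κ → Fin n → ℝ) : u ⬝ᵥ (∑ i ∈ s, v i) = ∑ i ∈ s, u ⬝ᵥ v i := by
  simp only [dotProduct, Finset.sum_apply, Finset.mul_sum]
  exact Finset.sum_comm

lemma abs_convex {κ : Type*} (s : Finset κ) (lam : κ → ℝ) (h0 : ∀ i ∈ s, 0 ≤ lam i)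
    (g : κ → ℝ) : |∑ i ∈ s, lam i * g i| ≤ ∑ i ∈ s, lam i * |g i| := by
  refine (Finset.abs_sum_le_sum_abs _ _).trans (Finset.sum_le_sum fun i hi => ?_)
  rw [abs_mul, abs_of_nonneg (h0 i hi)]

theorem stmt13 (T nx nu M mX mU mT : ℕ) (hT : 1 ≤ T) (hnx : 1 ≤ nx) (hnu : 1 ≤ nu)
    (hM : 1 ≤ M)
    (Ahat : Matrix (Fin nx) (Fin nx) ℝ) (Bhat : Matrix (Fin nx) (Fin nu) ℝ)
    (ΔA : Fin M → Matrix (Fin nx) (Fin nx) ℝ) (ΔB : Fin M → Matrix (Fin nx) (Fin nu) ℝ)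
    (σw : ℝ) (hσw : 0 < σw) (x0 : Fin nx → ℝ)
    (Fx : Matrix (Fin mX) (Fin nx) ℝ) (bx : Fin mX → ℝ)
    (Fu : Matrix (Fin mU) (Fin nu) ℝ) (bu : Fin mU → ℝ)
    (FT : Matrix (Fin mT) (Fin nx) ℝ) (bT : Fin mT → ℝ)
    (Φx : Matrix (Fin (T + 1) × Fin nx) (Fin (T + 1) × Fin nx) ℝ)
    (Φu : Matrix (Fin (T + 1) × Fin nu) (Fin (T + 1) × Fin nx) ℝ)
    (Sig : Matrix (Fin (T + 1) × Fin nx) (Fin (T + 1) × Fin nx) ℝ)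
    (hΦxLT : BlockLT Φx) (hΦuLT : BlockLT Φu) (hSigLT : BlockLT Sig)
    (d : Fin T → Fin nx → ℝ) (hd : ∀ t i, 0 < d t i)
    (hSig00 : blk Sig 0 0 = 1)
    (hSigdiag : ∀ t : Fin T, blk Sig t.succ t.succ = Matrix.diagonal (d t))
    -- (a) the affine constraint
    (haff : (1 - shiftZ T nx * blkdiag T Ahat) * Φx - shiftZ T nx * blkdiag T Bhat * Φu = Sig)
    -- (b) the over-approximation constraints
    (hover : ∀ (t : Fin T) (j : Fin M) (i : Fin nx),
      |((ΔA j * blk Φx t.castSucc 0 + ΔB j * blk Φu t.castSucc 0 -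
          blk Sig t.succ 0).mulVec x0) i| +
        (∑ i' ∈ Finset.univ.filter (fun i' : Fin T => i' < t), ∑ k : Fin nx,
          |(ΔA j * blk Φx t.castSucc i'.succ + ΔB j * blk Φu t.castSucc i'.succ -
            blk Sig t.succ i'.succ) i k|) + σw ≤ d t i)
    -- (c) the tightened state constraints
    (hstate : ∀ (r : Fin mX) (t : Fin T),
      Fx r ⬝ᵥ (blk Φx t.castSucc 0).mulVec x0 +
        ∑ i ∈ Finset.univ.filter (fun i : Fin T => i < t), ∑ k : Fin nx,
          |Matrix.vecMul (Fx r) (blk Φx t.castSucc i.succ) k| ≤ bx r)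
    -- (d) the tightened terminal constraints
    (hterm : ∀ r : Fin mT,
      FT r ⬝ᵥ (blk Φx (Fin.last T) 0).mulVec x0 +
        ∑ i : Fin T, ∑ k : Fin nx,
          |Matrix.vecMul (FT r) (blk Φx (Fin.last T) i.succ) k| ≤ bT r)
    -- (e) the tightened input constraints
    (hinput : ∀ (r : Fin mU) (t : Fin T),
      Fu r ⬝ᵥ (blk Φu t.castSucc 0).mulVec x0 +
        ∑ i ∈ Finset.univ.filter (fun i : Fin T => i < t), ∑ k : Fin nx,
          |Matrix.vecMul (Fu r) (blk Φu t.castSucc i.succ) k| ≤ bu r) :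
    IsUnit Φx ∧
    BlockLT (Φu * Φx⁻¹) ∧
    ∀ p ∈ convexHull ℝ (Set.range fun j => (ΔA j, ΔB j)),
      ∀ w : Fin T → Fin nx → ℝ, (∀ t, ‖w t‖ ≤ σw) →
        ∀ (x : Fin (T + 1) → Fin nx → ℝ) (u : Fin (T + 1) → Fin nu → ℝ),
          x 0 = x0 →
          (∀ t : Fin (T + 1), u t = ∑ i ∈ Finset.univ.filter (fun i : Fin (T + 1) => i ≤ t),
            (blk (Φu * Φx⁻¹) t i).mulVec (x i)) →
          (∀ t : Fin T, x t.succ =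
            (Ahat + p.1).mulVec (x t.castSucc) + (Bhat + p.2).mulVec (u t.castSucc) + w t) →
          (∀ t : Fin T, Fx.mulVec (x t.castSucc) ≤ bx) ∧
          (∀ t : Fin T, Fu.mulVec (u t.castSucc) ≤ bu) ∧
          FT.mulVec (x (Fin.last T)) ≤ bT := by
  classical
  -- diagonal blocks of Φx equal those of Sig
  have haff' : Φx - shiftZ T nx * (blkdiag T Ahat * Φx) - shiftZ T nx * (blkdiag T Bhat * Φu)
      = Sig := by
    rw [← haff, Matrix.sub_mul, Matrix.one_mul, Matrix.mul_assoc, Matrix.mul_assoc]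
  have hdiagblk : ∀ t, blk Φx t t = blk Sig t t := by
    intro t; funext a b
    have h := congrFun (congrFun haff' (t, a)) (t, b)
    rw [Matrix.sub_apply, Matrix.sub_apply] at h
    rw [shift_blkdiag_diag_zero Ahat Φx hΦxLT, shift_blkdiag_diag_zero Bhat Φu hΦuLT] at h
    simpa [blk] using h
  have hdetblk : ∀ t : Fin (T + 1), (blk Φx t t).det ≠ 0 := by
    intro t
    rw [hdiagblk]
    induction t using Fin.cases with
    | zero => rw [hSig00]; simp
    | succ s =>
      rw [hSigdiag s, Matrix.det_diagonal]
      exact ne_of_gt (Finset.prod_pos fun i _ => hd s i)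
  have hdet : IsUnit Φx.det := isUnit_det_of_blockLT Φx hΦxLT hdetblk
  have hUnit : IsUnit Φx := (Matrix.isUnit_iff_isUnit_det Φx).mpr hdet
  have hinv1 : Φx * Φx⁻¹ = 1 := Matrix.mul_nonsing_inv Φx hdet
  have hKLT : BlockLT (Φu * Φx⁻¹) := blockLT_mul hΦuLT (blockLT_inv Φx hΦxLT hdet)
  refine ⟨hUnit, hKLT, ?_⟩
  intro p hp w hw x u hx0 hu hdyn
  -- convex decomposition of p
  rw [convexHull_eq] at hp
  obtain ⟨ι, tset, lam, z, hlam0, hlam1, hz, hzc⟩ := hp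
  have hzsum : ∑ i ∈ tset, lam i • z i = p := by
    rw [← hzc, Finset.centerMass_eq_of_sum_1 _ _ hlam1]
  have hjj : ∃ jj : ι → Fin M, ∀ i ∈ tset, (ΔA (jj i), ΔB (jj i)) = z i := by
    have h1 : ∀ i : ι, ∃ j : Fin M, i ∈ tset → (ΔA j, ΔB j) = z i := by
      intro i
      by_cases hi : i ∈ tset
      · obtain ⟨j, hj⟩ := hz i hi
        exact ⟨j, fun _ => hj⟩
      · exact ⟨⟨0, hM⟩, fun h => absurd h hi⟩
    choose jj hj using h1
    exact ⟨jj, fun i hi => hj i hi⟩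
  obtain ⟨jj, hjj⟩ := hjj
  have hA : p.1 = ∑ i ∈ tset, lam i • ΔA (jj i) := by
    rw [← hzsum, Prod.fst_sum]
    refine Finset.sum_congr rfl fun i hi => ?_
    rw [← hjj i hi]; rfl
  have hB : p.2 = ∑ i ∈ tset, lam i • ΔB (jj i) := by
    rw [← hzsum, Prod.snd_sum]
    refine Finset.sum_congr rfl fun i hi => ?_
    rw [← hjj i hi]; rfl
  -- stacked vectors
  set xt : Fin (T + 1) × Fin nx → ℝ := fun q => x q.1 q.2 with hxtdef
  set ut : Fin (T + 1) × Fin nu → ℝ := fun q => u q.1 q.2 with hutdef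
  set wt : Fin (T + 1) × Fin nx → ℝ :=
    fun q => Fin.cases (x0 q.2) (fun s => w s q.2) q.1 with hwtdef
  set wb : Fin (T + 1) × Fin nx → ℝ := Matrix.mulVec Φx⁻¹ xt with hwbdef
  have hxtwb : Φx.mulVec wb = xt := by
    rw [hwbdef, mulVec_mulVec, hinv1, one_mulVec]
  have hxx : ∀ s : Fin (T + 1), blockv xt s = x s := fun s => funext fun a' => by
    rw [hxtdef]; rfl
  have huu : ∀ s : Fin (T + 1), blockv ut s = u s := fun s => funext fun a' => by
    rw [hutdef]; rfl
  have hutwb : Φu.mulVec wb = ut := by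
    rw [hwbdef, mulVec_mulVec]
    funext q
    obtain ⟨t, a⟩ := q
    show blockv ((Φu * Φx⁻¹).mulVec xt) t a = u t a
    rw [mulVec_blockv, hu t, Finset.sum_apply, Finset.sum_apply]
    symm
    refine Finset.sum_filter_of_ne fun s _ hne => ?_
    by_contra hst
    apply hne
    have hz0 : blk (Φu * Φx⁻¹) t s = 0 := by
      funext a' b'; exact hKLT t s (lt_of_not_ge hst) a' b'
    simp [hxx s, hz0]
  have hdynstack : xt = (shiftZ T nx).mulVec ((blkdiag T (Ahat + p.1)).mulVec xt
      + (blkdiag T (Bhat + p.2)).mulVec ut) + wt := by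
    funext q
    obtain ⟨t, a⟩ := q
    induction t using Fin.cases with
    | zero =>
      rw [Pi.add_apply, shiftZ_mulVec_zero]
      show x 0 a = 0 + wt (0, a)
      rw [hwtdef, hx0, zero_add]
      simp
    | succ s =>
      rw [Pi.add_apply, shiftZ_mulVec_succ]
      show x s.succ a = ((blkdiag T (Ahat + p.1)).mulVec xt
        + (blkdiag T (Bhat + p.2)).mulVec ut) (s.castSucc, a) + wt (s.succ, a)
      rw [Pi.add_apply, blkdiag_mulVec, blkdiag_mulVec, hxx, huu]
      have hws : wt (s.succ, a) = w s a := by rw [hwtdef]; simp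
      rw [hws, hdyn s]
      rfl
  have hmain : Sig.mulVec wb = wt + (shiftZ T nx).mulVec ((blkdiag T p.1).mulVec xt
      + (blkdiag T p.2).mulVec ut) := by
    have e1 : Sig.mulVec wb = xt - (shiftZ T nx).mulVec ((blkdiag T Ahat).mulVec xt)
        - (shiftZ T nx).mulVec ((blkdiag T Bhat).mulVec ut) := by
      rw [← haff']
      rw [Matrix.sub_mulVec, Matrix.sub_mulVec]
      rw [← mulVec_mulVec (v := wb) (M := shiftZ T nx), ← mulVec_mulVec (v := wb),
        ← mulVec_mulVec (v := wb) (M := shiftZ T nx), ← mulVec_mulVec (v := wb),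
        hxtwb, hutwb]
    have e2 : xt = (shiftZ T nx).mulVec ((blkdiag T Ahat).mulVec xt)
        + (shiftZ T nx).mulVec ((blkdiag T p.1).mulVec xt)
        + (shiftZ T nx).mulVec ((blkdiag T Bhat).mulVec ut)
        + (shiftZ T nx).mulVec ((blkdiag T p.2).mulVec ut) + wt := by
      conv_lhs => rw [hdynstack]
      rw [blkdiag_add, blkdiag_add, Matrix.add_mulVec, Matrix.add_mulVec,
        Matrix.mulVec_add, Matrix.mulVec_add, Matrix.mulVec_add]
      abel
    have key : ∀ v1 v2 v3 v4 vt vx : Fin (T + 1) × Fin nx → ℝ,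
        vx = v1 + v2 + v3 + v4 + vt → vx - v1 - v3 = vt + (v2 + v4) := by
      intro v1 v2 v3 v4 vt vx h
      rw [h]; abel
    rw [e1, Matrix.mulVec_add]
    exact key _ _ _ _ _ _ e2
  have hws0 : ∀ a : Fin nx, wt (0, a) = x0 a := fun a => by rw [hwtdef]; simp
  have hwss : ∀ (s : Fin T) (a : Fin nx), wt (s.succ, a) = w s a := fun s a => by
    rw [hwtdef]; simp
  have hwb0 : blockv wb 0 = x0 := by
    funext a
    have h := congrFun hmain (0, a)
    rw [Pi.add_apply, shiftZ_mulVec_zero, add_zero, hws0] at h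
    have h2 : Sig.mulVec wb (0, a) = blockv (Sig.mulVec wb) 0 a := rfl
    rw [h2, mulVec_blockv, Finset.sum_apply] at h
    rw [Finset.sum_eq_single (0 : Fin (T + 1))] at h
    · rw [← h]
      have h3 : blk Sig 0 0 = 1 := hSig00
      rw [h3, one_mulVec]
    · intro s _ hs
      have hz1 : blk Sig 0 s = 0 := by
        funext a' b'
        exact hSigLT 0 s (Fin.pos_of_ne_zero hs) a' b'
      rw [hz1, zero_mulVec]
      rfl
    · simp
  -- convexified over-approximation bound
  have hoverC : ∀ (t : Fin T) (a : Fin nx),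
      |((p.1 * blk Φx t.castSucc 0 + p.2 * blk Φu t.castSucc 0 -
          blk Sig t.succ 0).mulVec x0) a| +
        (∑ i' ∈ Finset.univ.filter (fun i' : Fin T => i' < t), ∑ k : Fin nx,
          |(p.1 * blk Φx t.castSucc i'.succ + p.2 * blk Φu t.castSucc i'.succ -
            blk Sig t.succ i'.succ) a k|) + σw ≤ d t a := by
    intro t a
    have hEe : ∀ s : Fin (T + 1),
        p.1 * blk Φx t.castSucc s + p.2 * blk Φu t.castSucc s - blk Sig t.succ s
        = ∑ i ∈ tset, lam i • (ΔA (jj i) * blk Φx t.castSucc s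
            + ΔB (jj i) * blk Φu t.castSucc s - blk Sig t.succ s) := by
      intro s
      rw [hA, hB, Matrix.sum_mul, Matrix.sum_mul]
      simp only [Matrix.smul_mul, smul_sub, smul_add]
      rw [Finset.sum_sub_distrib, Finset.sum_add_distrib, ← Finset.sum_smul, hlam1, one_smul]
    have h0 : |((p.1 * blk Φx t.castSucc 0 + p.2 * blk Φu t.castSucc 0 -
          blk Sig t.succ 0).mulVec x0) a|
        = |∑ i ∈ tset, lam i * ((ΔA (jj i) * blk Φx t.castSucc 0
            + ΔB (jj i) * blk Φu t.castSucc 0 - blk Sig t.succ 0).mulVec x0) a| := by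
      rw [hEe 0, sum_smul_mulVec]
    have hks : ∀ (i' : Fin T) (k : Fin nx),
        |(p.1 * blk Φx t.castSucc i'.succ + p.2 * blk Φu t.castSucc i'.succ -
          blk Sig t.succ i'.succ) a k|
        = |∑ i ∈ tset, lam i * (ΔA (jj i) * blk Φx t.castSucc i'.succ
            + ΔB (jj i) * blk Φu t.castSucc i'.succ - blk Sig t.succ i'.succ) a k| := by
      intro i' k
      rw [hEe i'.succ, sum_smul_entry]
    rw [h0]
    have hks' : (∑ i' ∈ Finset.univ.filter (fun i' : Fin T => i' < t), ∑ k : Fin nx,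
          |(p.1 * blk Φx t.castSucc i'.succ + p.2 * blk Φu t.castSucc i'.succ -
            blk Sig t.succ i'.succ) a k|)
        = ∑ i' ∈ Finset.univ.filter (fun i' : Fin T => i' < t), ∑ k : Fin nx,
          |∑ i ∈ tset, lam i * (ΔA (jj i) * blk Φx t.castSucc i'.succ
            + ΔB (jj i) * blk Φu t.castSucc i'.succ - blk Sig t.succ i'.succ) a k| := by
      refine Finset.sum_congr rfl fun i' _ => Finset.sum_congr rfl fun k _ => hks i' k
    rw [hks']
    calc |∑ i ∈ tset, lam i * ((ΔA (jj i) * blk Φx t.castSucc 0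
            + ΔB (jj i) * blk Φu t.castSucc 0 - blk Sig t.succ 0).mulVec x0) a|
          + (∑ i' ∈ Finset.univ.filter (fun i' : Fin T => i' < t), ∑ k : Fin nx,
            |∑ i ∈ tset, lam i * (ΔA (jj i) * blk Φx t.castSucc i'.succ
              + ΔB (jj i) * blk Φu t.castSucc i'.succ - blk Sig t.succ i'.succ) a k|) + σw
        ≤ (∑ i ∈ tset, lam i * |((ΔA (jj i) * blk Φx t.castSucc 0
            + ΔB (jj i) * blk Φu t.castSucc 0 - blk Sig t.succ 0).mulVec x0) a|)
          + (∑ i' ∈ Finset.univ.filter (fun i' : Fin T => i' < t), ∑ k : Fin nx,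
            ∑ i ∈ tset, lam i * |(ΔA (jj i) * blk Φx t.castSucc i'.succ
              + ΔB (jj i) * blk Φu t.castSucc i'.succ - blk Sig t.succ i'.succ) a k|) + σw := by
          refine add_le_add (add_le_add (abs_convex _ _ hlam0 _) ?_) le_rfl
          refine Finset.sum_le_sum fun i' _ => Finset.sum_le_sum fun k _ => ?_
          exact abs_convex _ _ hlam0 _
      _ = ∑ i ∈ tset, lam i * (|((ΔA (jj i) * blk Φx t.castSucc 0
            + ΔB (jj i) * blk Φu t.castSucc 0 - blk Sig t.succ 0).mulVec x0) a|
          + (∑ i' ∈ Finset.univ.filter (fun i' : Fin T => i' < t), ∑ k : Fin nx,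
            |(ΔA (jj i) * blk Φx t.castSucc i'.succ
              + ΔB (jj i) * blk Φu t.castSucc i'.succ - blk Sig t.succ i'.succ) a k|) + σw) := by
          simp only [mul_add, Finset.sum_add_distrib, Finset.mul_sum]
          rw [← Finset.sum_mul, hlam1, one_mul]
          congr 1
          congr 1
          refine Eq.trans (Finset.sum_congr rfl fun i' _ => Finset.sum_comm) Finset.sum_comm
      _ ≤ ∑ i ∈ tset, lam i * d t a := by
          refine Finset.sum_le_sum fun i hi => ?_
          exact mul_le_mul_of_nonneg_left (hover t (jj i) a) (hlam0 i hi)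
      _ = d t a := by rw [← Finset.sum_mul, hlam1, one_mul]
  -- the recursion satisfied by wb
  have hrec : ∀ (t : Fin T) (a : Fin nx),
      d t a * blockv wb t.succ a =
        w t a + ((p.1 * blk Φx t.castSucc 0 + p.2 * blk Φu t.castSucc 0 -
          blk Sig t.succ 0).mulVec x0) a +
        ∑ i' ∈ Finset.univ.filter (fun i' : Fin T => i' < t),
          ((p.1 * blk Φx t.castSucc i'.succ + p.2 * blk Φu t.castSucc i'.succ -
            blk Sig t.succ i'.succ).mulVec (blockv wb i'.succ)) a := by
    intro t a
    have h := congrFun hmain (t.succ, a)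
    rw [Pi.add_apply, shiftZ_mulVec_succ, hwss, Pi.add_apply, blkdiag_mulVec,
      blkdiag_mulVec] at h
    have hL : Sig.mulVec wb (t.succ, a)
        = ∑ s : Fin (T + 1), ((blk Sig t.succ s).mulVec (blockv wb s)) a := by
      have h1 : Sig.mulVec wb (t.succ, a) = blockv (Sig.mulVec wb) t.succ a := rfl
      rw [h1, mulVec_blockv, Finset.sum_apply]
    have hX : (p.1.mulVec (blockv xt t.castSucc)) a
        = ∑ s : Fin (T + 1), ((p.1 * blk Φx t.castSucc s).mulVec (blockv wb s)) a := by
      rw [← hxtwb, mulVec_blockv, mulVec_sum', Finset.sum_apply]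
      exact Finset.sum_congr rfl fun s _ => by rw [mulVec_mulVec]
    have hY : (p.2.mulVec (blockv ut t.castSucc)) a
        = ∑ s : Fin (T + 1), ((p.2 * blk Φu t.castSucc s).mulVec (blockv wb s)) a := by
      rw [← hutwb, mulVec_blockv, mulVec_sum', Finset.sum_apply]
      exact Finset.sum_congr rfl fun s _ => by rw [mulVec_mulVec]
    rw [hL, hX, hY] at h
    have hE : ∀ s : Fin (T + 1),
        ((p.1 * blk Φx t.castSucc s + p.2 * blk Φu t.castSucc s -
          blk Sig t.succ s).mulVec (blockv wb s)) a
        = ((p.1 * blk Φx t.castSucc s).mulVec (blockv wb s)) a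
          + ((p.2 * blk Φu t.castSucc s).mulVec (blockv wb s)) a
          - ((blk Sig t.succ s).mulVec (blockv wb s)) a := by
      intro s
      rw [Matrix.sub_mulVec, Matrix.add_mulVec]
      simp
    have hsum : ∑ s : Fin (T + 1),
        ((p.1 * blk Φx t.castSucc s + p.2 * blk Φu t.castSucc s -
          blk Sig t.succ s).mulVec (blockv wb s)) a = -(w t a) := by
      rw [Finset.sum_congr rfl fun s _ => hE s, Finset.sum_sub_distrib,
        Finset.sum_add_distrib]
      linarith [h]
    rw [Fin.sum_univ_succ] at hsum
    rw [← Finset.sum_filter_add_sum_filter_not Finset.univ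
      (fun i' : Fin T => i' < t)] at hsum
    have hlast : ∑ i' ∈ Finset.univ.filter (fun i' : Fin T => ¬ i' < t),
        ((p.1 * blk Φx t.castSucc i'.succ + p.2 * blk Φu t.castSucc i'.succ
          - blk Sig t.succ i'.succ).mulVec (blockv wb i'.succ)) a
        = -(d t a * blockv wb t.succ a) := by
      rw [Finset.sum_eq_single_of_mem t
        (Finset.mem_filter.mpr ⟨Finset.mem_univ t, lt_irrefl t⟩)]
      · have e1 : blk Φx t.castSucc t.succ = 0 := by
          funext a' b'; exact hΦxLT _ _ (show t.castSucc < t.succ from Fin.castSucc_lt_succ) a' b'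
        have e2 : blk Φu t.castSucc t.succ = 0 := by
          funext a' b'; exact hΦuLT _ _ (show t.castSucc < t.succ from Fin.castSucc_lt_succ) a' b'
        rw [e1, e2, hSigdiag t, Matrix.mul_zero, Matrix.mul_zero, add_zero, zero_sub,
          Matrix.neg_mulVec]
        rw [Pi.neg_apply, mulVec_diagonal]
      · intro i' hi' hne
        have hti : t < i' := by
          rcases Finset.mem_filter.mp hi' with ⟨-, hnlt⟩
          exact lt_of_le_of_ne (not_lt.mp hnlt) (Ne.symm hne)
        have hle : (t : ℕ) ≤ (i' : ℕ) := le_of_lt hti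
        have e1 : blk Φx t.castSucc i'.succ = 0 := by
          funext a' b'
          exact hΦxLT _ _ (by rw [Fin.lt_def]; simpa using Nat.lt_succ_of_le hle) a' b'
        have e2 : blk Φu t.castSucc i'.succ = 0 := by
          funext a' b'
          exact hΦuLT _ _ (by rw [Fin.lt_def]; simpa using Nat.lt_succ_of_le hle) a' b'
        have e3 : blk Sig t.succ i'.succ = 0 := by
          funext a' b'
          exact hSigLT _ _ (by rw [Fin.lt_def]; simpa using Nat.succ_lt_succ hti) a' b'
        rw [e1, e2, e3, Matrix.mul_zero, Matrix.mul_zero, add_zero, sub_zero, zero_mulVec]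
        rfl
    rw [hlast, hwb0] at hsum
    linarith [hsum]
  -- the boundedness of wb
  have hbound : ∀ (t : Fin T) (a : Fin nx), |blockv wb t.succ a| ≤ 1 := by
    have step : ∀ t : Fin T, (∀ s : Fin T, s < t → ∀ a, |blockv wb s.succ a| ≤ 1) →
        ∀ a, |blockv wb t.succ a| ≤ 1 := by
      intro t ih a
      have hda : 0 < d t a := hd t a
      have h2 : |w t a| ≤ σw := by
        calc |w t a| = ‖w t a‖ := (Real.norm_eq_abs _).symm
          _ ≤ ‖w t‖ := norm_le_pi_norm (w t) a
          _ ≤ σw := hw t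
      have h3 : |∑ i' ∈ Finset.univ.filter (fun i' : Fin T => i' < t),
          ((p.1 * blk Φx t.castSucc i'.succ + p.2 * blk Φu t.castSucc i'.succ -
            blk Sig t.succ i'.succ).mulVec (blockv wb i'.succ)) a|
          ≤ ∑ i' ∈ Finset.univ.filter (fun i' : Fin T => i' < t), ∑ k : Fin nx,
            |(p.1 * blk Φx t.castSucc i'.succ + p.2 * blk Φu t.castSucc i'.succ -
              blk Sig t.succ i'.succ) a k| := by
        refine (Finset.abs_sum_le_sum_abs _ _).trans (Finset.sum_le_sum fun i' hi' => ?_)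
        exact abs_mulVec_le _ _ (fun k => ih i' (Finset.mem_filter.mp hi').2 k) a
      have h4 := hoverC t a
      have h5 : |((p.1 * blk Φx t.castSucc 0 + p.2 * blk Φu t.castSucc 0 -
          blk Sig t.succ 0).mulVec x0) a| ≥ 0 := abs_nonneg _
      have h1 : |d t a * blockv wb t.succ a| ≤ d t a := by
        rw [hrec t a]
        calc |w t a + _ + _| ≤ |w t a| + |_| + |_| := abs_add_three _ _ _
          _ ≤ d t a := by linarith [h2, h3, h4]
      rw [abs_mul, abs_of_pos hda] at h1
      exact le_of_mul_le_mul_left (by linarith) hda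
    have main : ∀ n : ℕ, ∀ t : Fin T, (t : ℕ) ≤ n → ∀ a, |blockv wb t.succ a| ≤ 1 := by
      intro n
      induction n with
      | zero =>
        intro t ht a
        exact step t (fun s hs a' => absurd (Fin.lt_def.mp hs) (by omega)) a
      | succ n ihn =>
        intro t ht a
        exact step t (fun s hs a' => ihn s (by have := Fin.lt_def.mp hs; omega) a') a
    exact fun t a => main (t : ℕ) t le_rfl a
  -- block expansion of the state
  have hxexp : ∀ t : Fin T, x t.castSucc =
      (blk Φx t.castSucc 0).mulVec x0 +
        ∑ i' ∈ Finset.univ.filter (fun i' : Fin T => i' < t),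
          (blk Φx t.castSucc i'.succ).mulVec (blockv wb i'.succ) := by
    intro t
    rw [← hxx t.castSucc, ← hxtwb, mulVec_blockv, Fin.sum_univ_succ, hwb0]
    congr 1
    symm
    refine Finset.sum_filter_of_ne fun i' _ hne => ?_
    by_contra hlt
    apply hne
    have hle : (t : ℕ) ≤ (i' : ℕ) := Fin.le_def.mp (not_lt.mp hlt)
    have e1 : blk Φx t.castSucc i'.succ = 0 := by
      funext a' b'
      exact hΦxLT _ _ (by rw [Fin.lt_def]; simpa using Nat.lt_succ_of_le hle) a' b'
    rw [e1, zero_mulVec]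
  have hxexpT : x (Fin.last T) =
      (blk Φx (Fin.last T) 0).mulVec x0 +
        ∑ i' : Fin T, (blk Φx (Fin.last T) i'.succ).mulVec (blockv wb i'.succ) := by
    rw [← hxx (Fin.last T), ← hxtwb, mulVec_blockv, Fin.sum_univ_succ, hwb0]
  have huexp : ∀ t : Fin T, u t.castSucc =
      (blk Φu t.castSucc 0).mulVec x0 +
        ∑ i' ∈ Finset.univ.filter (fun i' : Fin T => i' < t),
          (blk Φu t.castSucc i'.succ).mulVec (blockv wb i'.succ) := by
    intro t
    rw [← huu t.castSucc, ← hutwb, mulVec_blockv, Fin.sum_univ_succ, hwb0]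
    congr 1
    symm
    refine Finset.sum_filter_of_ne fun i' _ hne => ?_
    by_contra hlt
    apply hne
    have hle : (t : ℕ) ≤ (i' : ℕ) := by
      have h := not_lt.mp hlt
      exact Fin.le_def.mp h
    have e1 : blk Φu t.castSucc i'.succ = 0 := by
      funext a' b'
      exact hΦuLT _ _ (by rw [Fin.lt_def]; simpa using Nat.lt_succ_of_le hle) a' b'
    rw [e1, zero_mulVec]
  refine ⟨?_, ?_, ?_⟩
  · intro t
    rw [Pi.le_def]
    intro r
    have h1 : Fx.mulVec (x t.castSucc) r = Fx r ⬝ᵥ (x t.castSucc) := rfl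
    rw [h1, hxexp t, dotProduct_add, dotProduct_sum']
    refine le_trans (add_le_add_right (Finset.sum_le_sum fun i' _ => ?_) _) (hstate r t)
    rw [Matrix.dotProduct_mulVec]
    exact dot_le _ _ (fun k => hbound i' k)
  · intro t
    rw [Pi.le_def]
    intro r
    have h1 : Fu.mulVec (u t.castSucc) r = Fu r ⬝ᵥ (u t.castSucc) := rfl
    rw [h1, huexp t, dotProduct_add, dotProduct_sum']
    refine le_trans (add_le_add_right (Finset.sum_le_sum fun i' _ => ?_) _) (hinput r t)
    rw [Matrix.dotProduct_mulVec]
    exact dot_le _ _ (fun k => hbound i' k)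
  · rw [Pi.le_def]
    intro r
    have h1 : FT.mulVec (x (Fin.last T)) r = FT r ⬝ᵥ (x (Fin.last T)) := rfl
    rw [h1, hxexpT, dotProduct_add, dotProduct_sum']
    refine le_trans (add_le_add_right (Finset.sum_le_sum fun i' _ => ?_) _) (hterm r)
    rw [Matrix.dotProduct_mulVec]
    exact dot_le _ _ (fun k => hbound i' k)
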